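/- Let D ⊆ ℝⁿ be a nonempty closed convex set, ζ > 0, and H ∈ ℝ^{n×n} symmetric with H ⪰ ζI; for g ∈ ℝⁿ let d(g) ∈ D denote the unique minimizer of d' ↦ gᵀd' + (1/2)d'ᵀHd' over D. Let (Ω, F, P) be a probability space, γ ∈ ℝⁿ with ‖γ‖ ≤ κ for some κ > 0, ρ ≥ 0, and let G : Ω → ℝⁿ be a random vector with E[G] = γ and E[‖G − γ‖²] ≤ ρ. Then |E[Gᵀd(G)] − γᵀd(γ)| ≤ ζ⁻¹(ρ + κ√ρ). -/

import Mathlib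

open Matrix

/-- Euclidean norm of a vector in `ℝᵏ` (represented as `Fin k → ℝ`). -/
noncomputable def nrm2 {k : ℕ} (a : Fin k → ℝ) : ℝ := Real.sqrt (∑ i, (a i) ^ 2)

open MeasureTheory

noncomputable def toE {n : ℕ} : (Fin n → ℝ) ≃L[ℝ] EuclideanSpace ℝ (Fin n) :=
  (EuclideanSpace.equiv (Fin n) ℝ).symm

lemma nrm2_eq_norm {n : ℕ} (a : Fin n → ℝ) : nrm2 a = ‖toE a‖ := by
  rw [EuclideanSpace.norm_eq]
  simp [nrm2, Real.norm_eq_abs, sq_abs, toE]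

lemma dot_eq_inner {n : ℕ} (a b : Fin n → ℝ) : a ⬝ᵥ b = inner ℝ (toE a) (toE b) := by
  simp [PiLp.inner_apply, dotProduct, toE, RCLike.inner_apply, mul_comm]


section foc
variable {n : ℕ}

lemma dot_sym {H : Matrix (Fin n) (Fin n) ℝ} (hHsymm : H.IsHermitian)
    (x y : Fin n → ℝ) : x ⬝ᵥ (H *ᵥ y) = y ⬝ᵥ (H *ᵥ x) := by
  rw [Matrix.dotProduct_mulVec, ← Matrix.mulVec_transpose]
  have : Hᵀ = H := by
    have := hHsymm.eq
    simpa [Matrix.IsHermitian, Matrix.conjTranspose_eq_transpose_of_trivial] using hHsymm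
  rw [this, dotProduct_comm]

lemma pos_of_linear {A B : ℝ} (key : ∀ t : ℝ, 0 < t → t ≤ 1 → 0 ≤ t * A + t ^ 2 / 2 * B) :
    0 ≤ A := by
  by_contra h
  push_neg at h
  set t0 : ℝ := min 1 ((-A) / (|B| + 1)) with ht0
  have hBpos : (0:ℝ) < |B| + 1 := by positivity
  have ht0pos : 0 < t0 := lt_min one_pos (div_pos (by linarith) hBpos)
  have ht0le1 : t0 ≤ 1 := min_le_left _ _
  have ht0le : t0 ≤ (-A) / (|B| + 1) := min_le_right _ _
  have h3 : t0 * (|B| + 1) ≤ -A := by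
    rw [← le_div_iff₀ hBpos]
    exact ht0le
  have h4 : B ≤ |B| := le_abs_self B
  have h5 := key t0 ht0pos ht0le1
  nlinarith [mul_le_mul_of_nonneg_left h3 ht0pos.le, sq_nonneg t0, mul_pos ht0pos ht0pos]

lemma foc (D : Set (Fin n → ℝ)) (hDconv : Convex ℝ D)
    (H : Matrix (Fin n) (Fin n) ℝ) (hHsymm : H.IsHermitian)
    (dfun : (Fin n → ℝ) → (Fin n → ℝ))
    (hdfun : ∀ g : Fin n → ℝ, dfun g ∈ D ∧ ∀ d' ∈ D,
        g ⬝ᵥ dfun g + (1 / 2) * (dfun g ⬝ᵥ (H *ᵥ dfun g)) ≤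
          g ⬝ᵥ d' + (1 / 2) * (d' ⬝ᵥ (H *ᵥ d')))
    (g d' : Fin n → ℝ) (hd' : d' ∈ D) :
    0 ≤ (g + H *ᵥ dfun g) ⬝ᵥ (d' - dfun g) := by
  set d := dfun g with hd
  set v := d' - d with hv
  have hexp : (g + H *ᵥ d) ⬝ᵥ v = g ⬝ᵥ v + d ⬝ᵥ (H *ᵥ v) := by
    rw [add_dotProduct, dotProduct_comm (H *ᵥ d), dot_sym hHsymm]
  rw [hexp]
  apply pos_of_linear (B := v ⬝ᵥ (H *ᵥ v))
  intro t ht ht1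
  have hmem : d + t • v ∈ D := by
    have h := hDconv (hdfun g).1 hd' (by linarith : (0:ℝ) ≤ 1 - t) ht.le (by ring)
    have : (1 - t) • d + t • d' = d + t • v := by
      rw [hv]; module
    rwa [this] at h
  have hq := (hdfun g).2 _ hmem
  have e1 : g ⬝ᵥ (d + t • v) = g ⬝ᵥ d + t * (g ⬝ᵥ v) := by
    simp [dotProduct_add, dotProduct_smul, smul_eq_mul]
  have e2 : (d + t • v) ⬝ᵥ (H *ᵥ (d + t • v))
      = d ⬝ᵥ (H *ᵥ d) + 2 * t * (d ⬝ᵥ (H *ᵥ v)) + t ^ 2 * (v ⬝ᵥ (H *ᵥ v)) := by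
    simp only [Matrix.mulVec_add, Matrix.mulVec_smul, dotProduct_add,
      add_dotProduct, dotProduct_smul, smul_dotProduct, smul_eq_mul,
      dot_sym hHsymm v d]
    ring
  rw [e1, e2] at hq
  nlinarith [hq]
end foc

section lip
variable {n : ℕ}

lemma cauchy_dot (a b : Fin n → ℝ) : a ⬝ᵥ b ≤ nrm2 a * nrm2 b := by
  rw [dot_eq_inner, nrm2_eq_norm, nrm2_eq_norm]
  exact real_inner_le_norm _ _

lemma nrm2_nonneg (a : Fin n → ℝ) : 0 ≤ nrm2 a := Real.sqrt_nonneg _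

lemma nrm2_sq (a : Fin n → ℝ) : a ⬝ᵥ a = nrm2 a ^ 2 := by
  rw [dot_eq_inner, nrm2_eq_norm, real_inner_self_eq_norm_sq]

lemma lipschitz_dfun (D : Set (Fin n → ℝ)) (hDconv : Convex ℝ D)
    (ζ : ℝ) (hζ : 0 < ζ)
    (H : Matrix (Fin n) (Fin n) ℝ) (hHsymm : H.IsHermitian)
    (hHζ : (H - ζ • (1 : Matrix (Fin n) (Fin n) ℝ)).PosSemidef)
    (dfun : (Fin n → ℝ) → (Fin n → ℝ))
    (hdfun : ∀ g : Fin n → ℝ, dfun g ∈ D ∧ ∀ d' ∈ D,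
        g ⬝ᵥ dfun g + (1 / 2) * (dfun g ⬝ᵥ (H *ᵥ dfun g)) ≤
          g ⬝ᵥ d' + (1 / 2) * (d' ⬝ᵥ (H *ᵥ d')))
    (g₁ g₂ : Fin n → ℝ) :
    nrm2 (dfun g₁ - dfun g₂) ≤ ζ⁻¹ * nrm2 (g₁ - g₂) := by
  set d₁ := dfun g₁
  set d₂ := dfun g₂
  set Δ := d₁ - d₂ with hΔ
  have h1 := foc D hDconv H hHsymm dfun hdfun g₁ d₂ (hdfun g₂).1
  have h2 := foc D hDconv H hHsymm dfun hdfun g₂ d₁ (hdfun g₁).1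
  -- quadratic bound: ζ * (Δ ⬝ᵥ Δ) ≤ Δ ⬝ᵥ (H *ᵥ Δ)
  have hps := hHζ.dotProduct_mulVec_nonneg Δ
  have hps' : ζ * (Δ ⬝ᵥ Δ) ≤ Δ ⬝ᵥ (H *ᵥ Δ) := by
    have : ((H - ζ • 1) *ᵥ Δ) = H *ᵥ Δ - ζ • Δ := by
      simp [Matrix.sub_mulVec, Matrix.smul_mulVec]
    simp only [star_trivial, this, dotProduct_sub, dotProduct_smul,
      smul_eq_mul] at hps
    linarith [hps]
  -- combine FOCs
  have key : (g₁ + H *ᵥ d₁) ⬝ᵥ (d₂ - d₁) + (g₂ + H *ᵥ d₂) ⬝ᵥ (d₁ - d₂)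
      = (g₂ - g₁) ⬝ᵥ Δ - Δ ⬝ᵥ (H *ᵥ Δ) := by
    simp only [hΔ, add_dotProduct, dotProduct_sub, sub_dotProduct,
      Matrix.mulVec_sub, dotProduct_comm (H *ᵥ d₁), dotProduct_comm (H *ᵥ d₂)]
    ring
  have hsum : Δ ⬝ᵥ (H *ᵥ Δ) ≤ (g₂ - g₁) ⬝ᵥ Δ := by linarith [key, h1, h2]
  have hcs : (g₂ - g₁) ⬝ᵥ Δ ≤ nrm2 (g₁ - g₂) * nrm2 Δ := by
    have hn : nrm2 (g₂ - g₁) = nrm2 (g₁ - g₂) := by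
      unfold nrm2; congr 1; apply Finset.sum_congr rfl; intro i _; simp; ring
    calc (g₂ - g₁) ⬝ᵥ Δ ≤ nrm2 (g₂ - g₁) * nrm2 Δ := cauchy_dot _ _
      _ = nrm2 (g₁ - g₂) * nrm2 Δ := by rw [hn]
  have hfin : ζ * nrm2 Δ ^ 2 ≤ nrm2 (g₁ - g₂) * nrm2 Δ := by
    rw [← nrm2_sq]; linarith
  rcases eq_or_lt_of_le (nrm2_nonneg Δ) with h0 | hpos
  · rw [← h0]; exact mul_nonneg (by positivity) (nrm2_nonneg _)
  · have hle : ζ * nrm2 Δ ≤ nrm2 (g₁ - g₂) := by nlinarith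
    calc nrm2 Δ = ζ⁻¹ * (ζ * nrm2 Δ) := by field_simp
      _ ≤ ζ⁻¹ * nrm2 (g₁ - g₂) := by
          apply mul_le_mul_of_nonneg_left hle (by positivity)


open MeasureTheory


/-- Bias bound for inner products of stochastic gradients with the corresponding search
directions: `|E[Gᵀd(G)] − γᵀd(γ)| ≤ ζ⁻¹(ρ + κ√ρ)` when `E[G] = γ`, `‖γ‖ ≤ κ`, and
`E[‖G − γ‖²] ≤ ρ`. -/
theorem expected_inner_product_difference_bound
    {n : ℕ} (D : Set (Fin n → ℝ)) (hDne : D.Nonempty) (hDclosed : IsClosed D)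
    (hDconv : Convex ℝ D)
    (ζ : ℝ) (hζ : 0 < ζ) (H : Matrix (Fin n) (Fin n) ℝ)
    (hHsymm : H.IsHermitian) (hHζ : (H - ζ • (1 : Matrix (Fin n) (Fin n) ℝ)).PosSemidef)
    (dfun : (Fin n → ℝ) → (Fin n → ℝ))
    (hdfun : ∀ g : Fin n → ℝ, dfun g ∈ D ∧ ∀ d' ∈ D,
        g ⬝ᵥ dfun g + (1 / 2) * (dfun g ⬝ᵥ (H *ᵥ dfun g)) ≤
          g ⬝ᵥ d' + (1 / 2) * (d' ⬝ᵥ (H *ᵥ d')))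
    (Ω : Type*) [MeasurableSpace Ω] (P : Measure Ω) [IsProbabilityMeasure P]
    (γ : Fin n → ℝ) (κ : ℝ) (hκ : 0 < κ) (hγ : nrm2 γ ≤ κ) (ρ : ℝ) (hρ : 0 ≤ ρ)
    (G : Ω → (Fin n → ℝ)) (hGmeas : Measurable G)
    (hGint : Integrable G P) (hGmean : ∫ ω, G ω ∂P = γ)
    (hGint2 : Integrable (fun ω => nrm2 (G ω - γ) ^ 2) P)
    (hGmom : ∫ ω, nrm2 (G ω - γ) ^ 2 ∂P ≤ ρ) :
    |(∫ ω, (G ω ⬝ᵥ dfun (G ω)) ∂P) - γ ⬝ᵥ dfun γ| ≤ ζ⁻¹ * (ρ + κ * Real.sqrt ρ) := by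
  have lip := lipschitz_dfun D hDconv ζ hζ H hHsymm hHζ dfun hdfun
  set E := EuclideanSpace ℝ (Fin n)
  set X : Ω → E := fun ω => toE (G ω - γ) with hX
  set Y : Ω → E := fun ω => toE (dfun (G ω) - dfun γ) with hY
  set c : E := toE (dfun γ) with hc
  set γ' : E := toE γ with hγ'
  -- basic integrability / measurability
  have hGsubint : Integrable (fun ω => G ω - γ) P := hGint.sub (integrable_const γ)
  have hXint : Integrable X P :=
    (toE.toContinuousLinearMap : (Fin n → ℝ) →L[ℝ] E).integrable_comp hGsubint
  have hXmeas : Measurable X :=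
    toE.continuous.measurable.comp (hGmeas.sub measurable_const)
  have hXmean : ∫ ω, X ω ∂P = 0 := by
    have hcc := (toE.toContinuousLinearMap : (Fin n → ℝ) →L[ℝ] E).integral_comp_comm hGsubint
    simp only [ContinuousLinearEquiv.coe_coe] at hcc
    rw [hX, hcc]
    have : ∫ ω, (G ω - γ) ∂P = 0 := by
      rw [integral_sub hGint (integrable_const γ), hGmean]
      simp
    rw [this]; simp
  have hXnorm2 : ∀ ω, ‖X ω‖ ^ 2 = nrm2 (G ω - γ) ^ 2 := by
    intro ω; rw [nrm2_eq_norm]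
  have hXsqint : Integrable (fun ω => ‖X ω‖ ^ 2) P := by
    apply hGint2.congr
    filter_upwards with ω using (hXnorm2 ω).symm
  have hXsqmom : ∫ ω, ‖X ω‖ ^ 2 ∂P ≤ ρ := by
    calc ∫ ω, ‖X ω‖ ^ 2 ∂P = ∫ ω, nrm2 (G ω - γ) ^ 2 ∂P := by
          apply integral_congr_ae; filter_upwards with ω using hXnorm2 ω
      _ ≤ ρ := hGmom
  -- Lipschitz map on E
  set F : E → E := fun x => toE (dfun (toE.symm x)) with hF
  have hFlip : LipschitzWith (ζ⁻¹).toNNReal F := by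
    apply LipschitzWith.of_dist_le_mul
    intro x y
    rw [dist_eq_norm, dist_eq_norm, hF]
    have e1 : toE (dfun (toE.symm x)) - toE (dfun (toE.symm y))
        = toE (dfun (toE.symm x) - dfun (toE.symm y)) := (map_sub toE _ _).symm
    have e2 : x - y = toE (toE.symm x - toE.symm y) := by
      rw [map_sub]; simp
    rw [e1, e2, ← nrm2_eq_norm, ← nrm2_eq_norm]
    have := lip (toE.symm x) (toE.symm y)
    simpa [Real.coe_toNNReal _ (inv_nonneg.mpr hζ.le)] using this
  have hYeq : ∀ ω, Y ω = F (toE (G ω)) - c := by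
    intro ω
    rw [hY, hF, hc]
    simp [map_sub]
  have hYmeas : Measurable Y := by
    have : Measurable fun ω => F (toE (G ω)) :=
      hFlip.continuous.measurable.comp (toE.continuous.measurable.comp hGmeas)
    have h2 : Measurable fun ω => F (toE (G ω)) - c := this.sub measurable_const
    have h3 : Y = fun ω => F (toE (G ω)) - c := funext hYeq
    rw [h3]; exact h2
  have hYle : ∀ ω, ‖Y ω‖ ≤ ζ⁻¹ * ‖X ω‖ := by
    intro ω
    rw [hY, hX, ← nrm2_eq_norm, ← nrm2_eq_norm]
    exact lip (G ω) γ
  have hXnormint : Integrable (fun ω => ‖X ω‖) P := hXint.norm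
  have hYbound_int : Integrable (fun ω => ζ⁻¹ * ‖X ω‖) P := hXnormint.const_mul _
  have hYint : Integrable Y P := by
    apply Integrable.mono' hYbound_int hYmeas.aestronglyMeasurable
    filter_upwards with ω using hYle ω
  have hYnormint : Integrable (fun ω => ‖Y ω‖) P := hYint.norm
  have hdecomp : ∀ ω, G ω ⬝ᵥ dfun (G ω)
      = (inner ℝ (X ω) (Y ω) : ℝ) + inner ℝ γ' (Y ω) + inner ℝ (X ω) c + γ ⬝ᵥ dfun γ := by
    intro ω
    show _ = (inner ℝ (toE (G ω - γ)) (toE (dfun (G ω) - dfun γ)) : ℝ)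
        + inner ℝ (toE γ) (toE (dfun (G ω) - dfun γ))
        + inner ℝ (toE (G ω - γ)) (toE (dfun γ)) + γ ⬝ᵥ dfun γ
    rw [← dot_eq_inner, ← dot_eq_inner, ← dot_eq_inner]
    simp only [dotProduct_sub, sub_dotProduct]
    ring
  have hI1meas : Measurable (fun ω => (inner ℝ (X ω) (Y ω) : ℝ)) := hXmeas.inner hYmeas
  have hinnerb : ∀ ω, |(inner ℝ (X ω) (Y ω) : ℝ)| ≤ ζ⁻¹ * ‖X ω‖ ^ 2 := by
    intro ω
    calc |(inner ℝ (X ω) (Y ω) : ℝ)| ≤ ‖X ω‖ * ‖Y ω‖ := abs_real_inner_le_norm _ _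
      _ ≤ ‖X ω‖ * (ζ⁻¹ * ‖X ω‖) := mul_le_mul_of_nonneg_left (hYle ω) (norm_nonneg _)
      _ = ζ⁻¹ * ‖X ω‖ ^ 2 := by ring
  have hI1 : Integrable (fun ω => (inner ℝ (X ω) (Y ω) : ℝ)) P := by
    apply Integrable.mono' (hXsqint.const_mul ζ⁻¹) hI1meas.aestronglyMeasurable
    filter_upwards with ω
    rw [Real.norm_eq_abs]; exact hinnerb ω
  have hI2 : Integrable (fun ω => (inner ℝ γ' (Y ω) : ℝ)) P := hYint.const_inner γ'
  have hI3 : Integrable (fun ω => (inner ℝ (X ω) c : ℝ)) P := hXint.inner_const c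
  have e0 : ∫ ω, (G ω ⬝ᵥ dfun (G ω)) ∂P
      = ∫ ω, ((inner ℝ (X ω) (Y ω) : ℝ) + inner ℝ γ' (Y ω) + inner ℝ (X ω) c
          + γ ⬝ᵥ dfun γ) ∂P :=
    integral_congr_ae (by filter_upwards with ω using hdecomp ω)
  have hI12 : Integrable (fun ω => (inner ℝ (X ω) (Y ω) : ℝ) + inner ℝ γ' (Y ω)) P := hI1.add hI2
  have hI123 : Integrable
      (fun ω => (inner ℝ (X ω) (Y ω) : ℝ) + inner ℝ γ' (Y ω) + inner ℝ (X ω) c) P := hI12.add hI3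
  rw [integral_add hI123 (integrable_const _),
    integral_add hI12 hI3, integral_add hI1 hI2, integral_const] at e0
  simp only [measure_univ, probReal_univ, one_smul, smul_eq_mul, one_mul] at e0
  have eY : ∫ ω, (inner ℝ γ' (Y ω) : ℝ) ∂P = inner ℝ γ' (∫ ω, Y ω ∂P) := integral_inner hYint γ'
  have eX : ∫ ω, (inner ℝ (X ω) c : ℝ) ∂P = 0 := by
    have hcomm : ∀ ω, (inner ℝ (X ω) c : ℝ) = inner ℝ c (X ω) := fun ω => real_inner_comm _ _
    rw [integral_congr_ae (by filter_upwards with ω using hcomm ω),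
      integral_inner hXint c, hXmean, inner_zero_right]
  rw [eY, eX] at e0
  set m := ∫ ω, ‖X ω‖ ∂P with hm
  have hmnonneg : 0 ≤ m := integral_nonneg fun ω => norm_nonneg _
  have hvar : m ^ 2 ≤ ∫ ω, ‖X ω‖ ^ 2 ∂P := by
    have h0 : 0 ≤ ∫ ω, (‖X ω‖ - m) ^ 2 ∂P := integral_nonneg fun ω => sq_nonneg _
    have hexp : ∫ ω, (‖X ω‖ - m) ^ 2 ∂P
        = (∫ ω, ‖X ω‖ ^ 2 ∂P) - 2 * m * m + m ^ 2 := by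
      have hfun : (fun ω => (‖X ω‖ - m) ^ 2)
          = fun ω => ‖X ω‖ ^ 2 - 2 * m * ‖X ω‖ + m ^ 2 := by
        funext ω; ring
      have hsub : Integrable (fun ω => ‖X ω‖ ^ 2 - 2 * m * ‖X ω‖) P :=
        hXsqint.sub (hXnormint.const_mul (2 * m))
      rw [hfun, integral_add hsub (integrable_const _),
        integral_sub hXsqint (hXnormint.const_mul (2 * m)),
        integral_const_mul, integral_const]
      simp only [measure_univ, probReal_univ, one_smul, smul_eq_mul, one_mul, ← hm]
    rw [hexp] at h0
    nlinarith [h0]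
  have hmle : m ≤ Real.sqrt ρ := by
    have hmρ : m ^ 2 ≤ ρ := le_trans hvar hXsqmom
    calc m = Real.sqrt (m ^ 2) := (Real.sqrt_sq hmnonneg).symm
      _ ≤ Real.sqrt ρ := Real.sqrt_le_sqrt hmρ
  have hnormintY : ‖∫ ω, Y ω ∂P‖ ≤ ζ⁻¹ * Real.sqrt ρ := by
    calc ‖∫ ω, Y ω ∂P‖ ≤ ∫ ω, ‖Y ω‖ ∂P := norm_integral_le_integral_norm _
      _ ≤ ∫ ω, ζ⁻¹ * ‖X ω‖ ∂P := integral_mono hYnormint hYbound_int hYle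
      _ = ζ⁻¹ * m := integral_const_mul _ _
      _ ≤ ζ⁻¹ * Real.sqrt ρ := mul_le_mul_of_nonneg_left hmle (by positivity)
  have hterm1 : |∫ ω, (inner ℝ (X ω) (Y ω) : ℝ) ∂P| ≤ ζ⁻¹ * ρ := by
    calc |∫ ω, (inner ℝ (X ω) (Y ω) : ℝ) ∂P| ≤ ∫ ω, |(inner ℝ (X ω) (Y ω) : ℝ)| ∂P := by
          simpa [Real.norm_eq_abs] using
            norm_integral_le_integral_norm (μ := P) (fun ω => (inner ℝ (X ω) (Y ω) : ℝ))
      _ ≤ ∫ ω, ζ⁻¹ * ‖X ω‖ ^ 2 ∂P := integral_mono hI1.abs (hXsqint.const_mul _) hinnerb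
      _ = ζ⁻¹ * ∫ ω, ‖X ω‖ ^ 2 ∂P := integral_const_mul _ _
      _ ≤ ζ⁻¹ * ρ := mul_le_mul_of_nonneg_left hXsqmom (by positivity)
  have hγ'κ : ‖γ'‖ ≤ κ := by rw [hγ', ← nrm2_eq_norm]; exact hγ
  have hterm2 : |(inner ℝ γ' (∫ ω, Y ω ∂P) : ℝ)| ≤ κ * (ζ⁻¹ * Real.sqrt ρ) := by
    calc |(inner ℝ γ' (∫ ω, Y ω ∂P) : ℝ)| ≤ ‖γ'‖ * ‖∫ ω, Y ω ∂P‖ := abs_real_inner_le_norm _ _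
      _ ≤ κ * (ζ⁻¹ * Real.sqrt ρ) :=
          mul_le_mul hγ'κ hnormintY (norm_nonneg _) hκ.le
  rw [e0]
  have habs : |(∫ ω, (inner ℝ (X ω) (Y ω) : ℝ) ∂P) + (inner ℝ γ' (∫ ω, Y ω ∂P) : ℝ) + 0
      + γ ⬝ᵥ dfun γ - γ ⬝ᵥ dfun γ|
      ≤ |∫ ω, (inner ℝ (X ω) (Y ω) : ℝ) ∂P| + |(inner ℝ γ' (∫ ω, Y ω ∂P) : ℝ)| := by
    have : (∫ ω, (inner ℝ (X ω) (Y ω) : ℝ) ∂P) + (inner ℝ γ' (∫ ω, Y ω ∂P) : ℝ) + 0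
        + γ ⬝ᵥ dfun γ - γ ⬝ᵥ dfun γ
        = (∫ ω, (inner ℝ (X ω) (Y ω) : ℝ) ∂P) + (inner ℝ γ' (∫ ω, Y ω ∂P) : ℝ) := by ring
    rw [this]
    exact abs_add_le _ _
  calc |(∫ ω, (inner ℝ (X ω) (Y ω) : ℝ) ∂P) + (inner ℝ γ' (∫ ω, Y ω ∂P) : ℝ) + 0
      + γ ⬝ᵥ dfun γ - γ ⬝ᵥ dfun γ|
      ≤ |∫ ω, (inner ℝ (X ω) (Y ω) : ℝ) ∂P| + |(inner ℝ γ' (∫ ω, Y ω ∂P) : ℝ)| := habs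
    _ ≤ ζ⁻¹ * ρ + κ * (ζ⁻¹ * Real.sqrt ρ) := add_le_add hterm1 hterm2
    _ = ζ⁻¹ * (ρ + κ * Real.sqrt ρ) := by ring
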